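/- arXiv:2509.16825 — 2 statements merged into one kernel-verified Lean document; each statement's English description precedes it below -/
import Mathlib

section
/- Let c : ℤ → ℂ be finitely supported in [−N₀, N₀], not identically zero, and let m ≥ 1 be minimal with μ_{m−1} := Σ_r r^{m−1} c_r ≠ 0. Then there exist C > 0 and R ∈ ℕ such that for all |n| ≥ R, |Σ_{|r|≤N₀} c_r/(n − r)| ≥ C/(1 + |n|)^m. -/
/-- For `c : ℤ → ℂ` finitely supported in `[−N₀, N₀]`, not identically zero, with
`m ≥ 1` minimal such that the moment `μ_{m−1} = Σ_r r^{m−1} c_r ≠ 0`, there exist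
`C > 0` and `R ∈ ℕ` such that for all `|n| ≥ R`,
`|Σ_{|r|≤N₀} c_r/(n − r)| ≥ C/(1 + |n|)^m`. -/
theorem simple_fraction_sum_lower_bound_moment (N₀ : ℕ) (c : ℤ → ℂ)
    (hsupp : ∀ r : ℤ, (N₀ : ℤ) < |r| → c r = 0)
    (hne : ∃ r : ℤ, c r ≠ 0)
    (m : ℕ) (hm : 1 ≤ m)
    (hμ : (∑ r ∈ Finset.Icc (-(N₀ : ℤ)) (N₀ : ℤ), (r : ℂ) ^ (m - 1) * c r) ≠ 0)
    (hmin : ∀ p : ℕ, p < m - 1 →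
      (∑ r ∈ Finset.Icc (-(N₀ : ℤ)) (N₀ : ℤ), (r : ℂ) ^ p * c r) = 0) :
    ∃ C > (0:ℝ), ∃ R : ℕ, ∀ n : ℤ, (R : ℤ) ≤ |n| →
      C / (1 + |(n : ℝ)|) ^ m ≤
        ‖∑ r ∈ Finset.Icc (-(N₀ : ℤ)) (N₀ : ℤ), c r / ((n : ℂ) - (r : ℂ))‖ := by
  classical
  set I := Finset.Icc (-(N₀ : ℤ)) (N₀ : ℤ) with hI
  set μ : ℂ := ∑ r ∈ I, (r : ℂ) ^ (m - 1) * c r with hμdef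
  set B : ℝ := ∑ r ∈ I, ‖c r‖ * (N₀ : ℝ) ^ m with hBdef
  have hBnn : 0 ≤ B := Finset.sum_nonneg fun r _ =>
    mul_nonneg (norm_nonneg _) (pow_nonneg (Nat.cast_nonneg _) _)
  have hμpos : 0 < ‖μ‖ := norm_pos_iff.mpr hμ
  set K : ℕ := ⌈2 * B / ‖μ‖⌉₊ with hKdef
  refine ⟨‖μ‖ / 2 ^ (m + 1), by positivity, N₀ + 1 + K, ?_⟩
  intro n hn
  have hnR : ((N₀ : ℝ) + 1 + K) ≤ |(n : ℝ)| := by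
    have : ((N₀ + 1 + K : ℕ) : ℤ) ≤ |n| := hn
    have h2 : ((N₀ + 1 + K : ℕ) : ℝ) ≤ |(n : ℝ)| := by exact_mod_cast this
    push_cast at h2
    linarith
  have hKnn : (0:ℝ) ≤ K := Nat.cast_nonneg _
  have hnN : (N₀ : ℝ) + 1 ≤ |(n : ℝ)| := by linarith
  have hnpos : (1:ℝ) ≤ |(n : ℝ)| := by
    have : (0:ℝ) ≤ N₀ := Nat.cast_nonneg _
    linarith
  -- per-element facts
  have hrabs : ∀ r ∈ I, |(r : ℝ)| ≤ (N₀ : ℝ) := by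
    intro r hr
    rw [hI, Finset.mem_Icc] at hr
    have : |r| ≤ (N₀ : ℤ) := abs_le.mpr hr
    exact_mod_cast this
  have hsub : ∀ r ∈ I, ((N₀:ℝ) - N₀ + 1 ≤ |(n:ℝ) - r|) := by
    intro r hr; have := hrabs r hr
    have h := abs_sub_abs_le_abs_sub (n:ℝ) (r:ℝ)
    linarith
  have hsubpos : ∀ r ∈ I, (0:ℝ) < |(n:ℝ) - r| := by
    intro r hr; have := hsub r hr; linarith
  have hne' : ∀ r ∈ I, ((n : ℂ) - r) ≠ 0 := by
    intro r hr
    have h := hsubpos r hr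
    intro hc
    have : ((n : ℝ) : ℂ) - ((r : ℝ) : ℂ) = 0 := by push_cast; push_cast at hc; exact hc
    have : (n : ℝ) = (r : ℝ) := by
      have := sub_eq_zero.mp this
      exact_mod_cast this
    rw [this] at h
    simp at h
  have habsnr : ∀ r ∈ I, ‖(n:ℂ) - r‖ = |(n:ℝ) - r| := by
    intro r hr
    have : ((n:ℂ) - r) = (((n:ℝ) - r : ℝ) : ℂ) := by push_cast; ring
    rw [this, Complex.norm_real, Real.norm_eq_abs]
  -- key identity
  set S : ℂ := ∑ r ∈ I, c r / ((n : ℂ) - r) with hSdef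
  set E : ℂ := ∑ r ∈ I, c r * (r:ℂ) ^ m / ((n : ℂ) - r) with hEdef
  have key : (n : ℂ) ^ m * S = μ + E := by
    rw [hSdef, Finset.mul_sum]
    have hterm : ∀ r ∈ I, (n:ℂ) ^ m * (c r / ((n:ℂ) - r)) =
        (∑ i ∈ Finset.range m, (n:ℂ) ^ i * (r:ℂ) ^ (m - 1 - i)) * c r
          + c r * (r:ℂ) ^ m / ((n:ℂ) - r) := by
      intro r hr
      have hg : (∑ i ∈ Finset.range m, (n:ℂ) ^ i * (r:ℂ) ^ (m - 1 - i)) * ((n:ℂ) - r)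
          = (n:ℂ) ^ m - (r:ℂ) ^ m := geom_sum₂_mul _ _ m
      have hnr := hne' r hr
      field_simp
      linear_combination (-(c r)) * hg
    rw [Finset.sum_congr rfl hterm, Finset.sum_add_distrib]
    congr 1
    · -- first sum equals μ
      have h1 : ∀ r ∈ I, (∑ i ∈ Finset.range m, (n:ℂ) ^ i * (r:ℂ) ^ (m - 1 - i)) * c r
          = ∑ i ∈ Finset.range m, (n:ℂ) ^ i * ((r:ℂ) ^ (m - 1 - i) * c r) := by
        intro r _; rw [Finset.sum_mul]; exact Finset.sum_congr rfl fun i _ => by ring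
      rw [Finset.sum_congr rfl h1, Finset.sum_comm]
      rw [Finset.sum_eq_single_of_mem 0 (Finset.mem_range.mpr hm)]
      · simp [hμdef]
      · intro i _ hi0
        have hi : i ∈ Finset.range m := by assumption
        have him : i < m := Finset.mem_range.mp hi
        have : (∑ r ∈ I, (r:ℂ) ^ (m - 1 - i) * c r) = 0 :=
          hmin (m - 1 - i) (by omega)
        rw [← Finset.mul_sum, this, mul_zero]
  -- bound on E
  have hEbound : ‖E‖ ≤ B / (|(n:ℝ)| - N₀) := by
    have hden : (0:ℝ) < |(n:ℝ)| - N₀ := by linarith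
    calc ‖E‖ ≤ ∑ r ∈ I, ‖c r * (r:ℂ) ^ m / ((n:ℂ) - r)‖ :=
          norm_sum_le _ _
      _ ≤ ∑ r ∈ I, ‖c r‖ * (N₀:ℝ) ^ m / (|(n:ℝ)| - N₀) := by
          apply Finset.sum_le_sum
          intro r hr
          rw [norm_div, norm_mul, norm_pow, habsnr r hr]
          have hr1 : |(r:ℝ)| ≤ (N₀:ℝ) := hrabs r hr
          have hr2 : |(n:ℝ)| - N₀ ≤ |(n:ℝ) - r| := by
            have h := abs_sub_abs_le_abs_sub (n:ℝ) (r:ℝ)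
            linarith
          have hrc : ‖(r:ℂ)‖ = |(r:ℝ)| := by
            have : ((r:ℤ):ℂ) = (((r:ℝ)):ℂ) := by push_cast; ring
            rw [this, Complex.norm_real, Real.norm_eq_abs]
          rw [hrc]
          apply div_le_div₀ (by positivity)
          · exact mul_le_mul_of_nonneg_left (pow_le_pow_left₀ (abs_nonneg _) hr1 m)
              (norm_nonneg _)
          · exact hden
          · exact hr2
      _ = B / (|(n:ℝ)| - N₀) := by rw [hBdef, Finset.sum_div]
  have hE2 : ‖E‖ ≤ ‖μ‖ / 2 := by
    have hden : (0:ℝ) < |(n:ℝ)| - N₀ := by linarith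
    have hK : 2 * B / ‖μ‖ ≤ (K:ℝ) := Nat.le_ceil _
    have h1 : 2 * B ≤ ‖μ‖ * K := by
      rw [div_le_iff₀ hμpos] at hK; linarith
    have h2 : B / (|(n:ℝ)| - N₀) ≤ ‖μ‖ / 2 := by
      rw [div_le_div_iff₀ hden (by norm_num)]
      have : (K:ℝ) ≤ |(n:ℝ)| - N₀ := by linarith
      nlinarith
    linarith [hEbound]
  -- lower bound on |S|
  have hμE : ‖μ‖ / 2 ≤ ‖μ + E‖ := by
    have h1 : ‖μ‖ ≤ ‖μ + E‖ + ‖E‖ := by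
      have h2 : ‖(μ + E) + (-E)‖ ≤ ‖μ + E‖ + ‖-E‖ :=
        norm_add_le _ _
      simpa using h2
    linarith
  have habsn : ‖(n:ℂ)‖ = |(n:ℝ)| := by
    have : ((n:ℤ):ℂ) = (((n:ℝ)):ℂ) := by push_cast; ring
    rw [this, Complex.norm_real, Real.norm_eq_abs]
  have hSlow : ‖μ‖ / 2 / |(n:ℝ)| ^ m ≤ ‖S‖ := by
    rw [div_le_iff₀ (by positivity)]
    calc ‖μ‖ / 2 ≤ ‖μ + E‖ := hμE
      _ = ‖(n:ℂ) ^ m * S‖ := by rw [key]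
      _ = |(n:ℝ)| ^ m * ‖S‖ := by rw [norm_mul, norm_pow, habsn]
      _ = ‖S‖ * |(n:ℝ)| ^ m := by ring
  -- final comparison
  refine le_trans ?_ hSlow
  rw [div_le_div_iff₀ (by positivity) (by positivity)]
  have hpow : |(n:ℝ)| ^ m ≤ 2 ^ m * (1 + |(n:ℝ)|) ^ m := by
    calc |(n:ℝ)| ^ m ≤ (2 * (1 + |(n:ℝ)|)) ^ m :=
          pow_le_pow_left₀ (abs_nonneg _) (by linarith [abs_nonneg (n:ℝ)]) m
      _ = 2 ^ m * (1 + |(n:ℝ)|) ^ m := mul_pow _ _ _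
  have hmu2 : 0 < ‖μ‖ / 2 := by positivity
  calc ‖μ‖ / 2 ^ (m + 1) * |(n:ℝ)| ^ m
      ≤ ‖μ‖ / 2 ^ (m + 1) * (2 ^ m * (1 + |(n:ℝ)|) ^ m) := by
        exact mul_le_mul_of_nonneg_left hpow (by positivity)
    _ = ‖μ‖ / 2 * (1 + |(n:ℝ)|) ^ m := by
        rw [pow_succ]; field_simp
end

section
/- Let u be a nonzero band-limited periodic function with û supported in [−N₀, N₀] and Σ_r û(r) ≠ 0, and v(x) = (x−π)u(x). Then v does not belong to the Sobolev space H^s of the torus for any s ≥ 1/2; i.e. Σ_n (1+|n|^{2s})|v̂(n)|² diverges for s ≥ 1/2. -/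
/-- Fourier coefficient on the torus `[0, 2π]`. -/
noncomputable def fourierCoeff' (f : ℝ → ℂ) (ξ : ℤ) : ℂ :=
  (1 / (2 * (Real.pi : ℂ))) *
    ∫ x in (0:ℝ)..(2 * Real.pi), f x * Complex.exp (-Complex.I * (ξ : ℂ) * (x : ℂ))

open Complex intervalIntegral MeasureTheory Finset

lemma sawtooth_integral (m : ℤ) (hm : m ≠ 0) :
    (∫ x in (0:ℝ)..(2*Real.pi), ((x:ℂ) - Real.pi) * Complex.exp (Complex.I * m * x))
      = 2 * Real.pi / (Complex.I * m) := by
  have hIm : (Complex.I * m) ≠ 0 := by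
    simp [Complex.I_ne_zero, hm]
  set c : ℂ := Complex.I * m with hc
  have hderiv : ∀ x ∈ Set.uIcc (0:ℝ) (2*Real.pi),
      HasDerivAt (fun x : ℝ => (((x:ℂ) - Real.pi)/c - 1/c^2) * Complex.exp (c * x))
        (((x:ℂ) - Real.pi) * Complex.exp (c * x)) x := by
    intro x _
    have h1 : HasDerivAt (fun x : ℝ => (x:ℂ)) 1 x := by
      simpa using (hasDerivAt_id x).ofReal_comp
    have h2 : HasDerivAt (fun x : ℝ => c * (x:ℂ)) c x := by
      simpa using h1.const_mul c
    have h3 : HasDerivAt (fun x : ℝ => Complex.exp (c * x)) (Complex.exp (c * x) * c) x :=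
      h2.cexp
    have h4 := ((h1.sub_const (Real.pi:ℂ)).div_const c).sub_const (1/c^2)
    have := h4.mul h3
    convert this using 1
    · rfl
    · rfl
    field_simp
    ring
  have hint : IntervalIntegrable (fun x : ℝ => ((x:ℂ) - Real.pi) * Complex.exp (c * x))
      MeasureTheory.volume 0 (2*Real.pi) := by
    apply Continuous.intervalIntegrable
    continuity
  rw [integral_eq_sub_of_hasDerivAt hderiv hint]
  have hexp : Complex.exp (c * (2*Real.pi:ℝ)) = 1 := by
    rw [hc]
    push_cast
    rw [show Complex.I * m * (2*Real.pi) = m * (2*Real.pi*Complex.I) by ring]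
    exact Complex.exp_int_mul_two_pi_mul_I m
  rw [hexp]
  push_cast
  field_simp
  simp
  ring

lemma fourierCoeff'_eq [Fact (0 < 2*Real.pi)] (u : ℝ → ℂ)
    (hper : Function.Periodic u (2*Real.pi)) (n : ℤ) :
    fourierCoeff' u n = fourierCoeff hper.lift n := by
  rw [fourierCoeff_eq_intervalIntegral hper.lift n 0, fourierCoeff', zero_add]
  rw [Complex.real_smul]
  congr 1
  · push_cast; ring
  apply intervalIntegral.integral_congr
  intro x _
  simp only
  rw [fourier_coe_apply, Function.Periodic.lift_coe, smul_eq_mul, mul_comm]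
  congr 2
  push_cast
  have : (Real.pi : ℂ) ≠ 0 := by
    simpa using Real.pi_ne_zero
  field_simp

lemma band_limited_eq [Fact (0 < 2*Real.pi)] (u : ℝ → ℂ) (hu : Continuous u)
    (hper : Function.Periodic u (2*Real.pi)) (N₀ : ℕ)
    (hband : ∀ r : ℤ, (N₀:ℤ) < |r| → fourierCoeff hper.lift r = 0) (x : ℝ) :
    u x = ∑ r ∈ Finset.Icc (-(N₀:ℤ)) (N₀:ℤ),
      fourierCoeff hper.lift r * Complex.exp (Complex.I * r * x) := by
  have hcont : Continuous hper.lift := by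
    exact hu.quotient_liftOn' _
  set F : C(AddCircle (2*Real.pi), ℂ) := ⟨hper.lift, hcont⟩ with hF
  have habs : ∀ i ∉ Finset.Icc (-(N₀:ℤ)) (N₀:ℤ), (N₀:ℤ) < |i| := by
    intro i hi
    rw [Finset.mem_Icc] at hi
    rcases abs_cases i with ⟨h1,h2⟩|⟨h1,h2⟩ <;> omega
  have hcoeff : ∀ i ∉ Finset.Icc (-(N₀:ℤ)) (N₀:ℤ), fourierCoeff (F : AddCircle (2*Real.pi) → ℂ) i • (fourier i : C(AddCircle (2*Real.pi), ℂ)) = 0 := by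
    intro i hi
    have := habs i hi
    rw [show fourierCoeff (F : AddCircle (2*Real.pi) → ℂ) = fourierCoeff hper.lift from rfl,
      hband i this, zero_smul]
  have hsummable : Summable (fourierCoeff (F : AddCircle (2*Real.pi) → ℂ)) := by
    apply summable_of_ne_finset_zero (s := Finset.Icc (-(N₀:ℤ)) (N₀:ℤ))
    intro i hi
    exact hband i (habs i hi)
  have h1 := hasSum_fourier_series_of_summable hsummable
  have h2 : HasSum (fun i : ℤ => fourierCoeff (F : AddCircle (2*Real.pi) → ℂ) i • (fourier i : C(AddCircle (2*Real.pi), ℂ)))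
      (∑ i ∈ Finset.Icc (-(N₀:ℤ)) (N₀:ℤ), fourierCoeff (F : AddCircle (2*Real.pi) → ℂ) i • fourier i) :=
    hasSum_sum_of_ne_finset_zero hcoeff
  have hFeq : F = ∑ i ∈ Finset.Icc (-(N₀:ℤ)) (N₀:ℤ),
      fourierCoeff (F : AddCircle (2*Real.pi) → ℂ) i • fourier i := h1.unique h2
  have := DFunLike.congr_fun hFeq ((x : ℝ) : AddCircle (2*Real.pi))
  rw [show F ((x:ℝ) : AddCircle (2*Real.pi)) = u x from rfl] at this
  rw [this, ContinuousMap.coe_sum, Finset.sum_apply]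
  apply Finset.sum_congr rfl
  intro i _
  rw [ContinuousMap.coe_smul, Pi.smul_apply, smul_eq_mul]
  congr 1
  rw [fourier_coe_apply]
  congr 1
  have hpi : (Real.pi : ℂ) ≠ 0 := by simpa using Real.pi_ne_zero
  push_cast
  field_simp

lemma vhat_formula (u : ℝ → ℂ) (hu : Continuous u) (N₀ : ℕ)
    (hexp : ∀ x : ℝ, u x = ∑ r ∈ Finset.Icc (-(N₀:ℤ)) (N₀:ℤ),
      fourierCoeff' u r * Complex.exp (Complex.I * r * x))
    (n : ℤ) (hn : (N₀:ℤ) < |n|) :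
    fourierCoeff' (fun x => ((x : ℂ) - (Real.pi : ℂ)) * u x) n
      = ∑ r ∈ Finset.Icc (-(N₀:ℤ)) (N₀:ℤ),
          fourierCoeff' u r * (Complex.I / ((n:ℂ) - (r:ℂ))) := by
  have hpi : (Real.pi : ℂ) ≠ 0 := by simpa using Real.pi_ne_zero
  have hne : ∀ r ∈ Finset.Icc (-(N₀:ℤ)) (N₀:ℤ), r - n ≠ 0 := by
    intro r hr
    rw [Finset.mem_Icc] at hr
    rcases abs_cases n with ⟨h1,h2⟩|⟨h1,h2⟩ <;> omega
  rw [fourierCoeff']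
  have hint : (∫ x in (0:ℝ)..(2*Real.pi),
      (fun x : ℝ => ((x : ℂ) - (Real.pi : ℂ)) * u x) x * Complex.exp (-Complex.I * n * x))
      = ∑ r ∈ Finset.Icc (-(N₀:ℤ)) (N₀:ℤ), fourierCoeff' u r *
          ∫ x in (0:ℝ)..(2*Real.pi), ((x:ℂ) - Real.pi) * Complex.exp (Complex.I * (r - n : ℤ) * x) := by
    have step1 : (∫ x in (0:ℝ)..(2*Real.pi),
        (fun x : ℝ => ((x : ℂ) - (Real.pi : ℂ)) * u x) x * Complex.exp (-Complex.I * n * x))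
        = ∫ x in (0:ℝ)..(2*Real.pi), ∑ r ∈ Finset.Icc (-(N₀:ℤ)) (N₀:ℤ),
            fourierCoeff' u r * (((x:ℂ) - Real.pi) * Complex.exp (Complex.I * (r - n : ℤ) * x)) := by
      apply intervalIntegral.integral_congr
      intro x _
      simp only
      rw [hexp x, Finset.mul_sum, Finset.sum_mul]
      apply Finset.sum_congr rfl
      intro r _
      rw [show ∀ a b c d : ℂ, a * (b * c) * d = b * (a * (c * d)) from fun a b c d => by ring,
        ← Complex.exp_add]
      congr 2
      push_cast
      ring
    rw [step1, intervalIntegral.integral_finset_sum]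
    · apply Finset.sum_congr rfl
      intro r _
      rw [intervalIntegral.integral_const_mul]
    · intro r _
      apply Continuous.intervalIntegrable
      continuity
  rw [hint, Finset.mul_sum]
  apply Finset.sum_congr rfl
  intro r hr
  rw [sawtooth_integral _ (hne r hr)]
  have h2 : ((r:ℂ) - n) ≠ 0 := by
    have := Int.cast_ne_zero (α := ℂ) |>.mpr (hne r hr)
    push_cast at this; exact this
  have h3 : ((n:ℂ) - r) ≠ 0 := by
    rw [← neg_sub]; exact neg_ne_zero.mpr h2
  have key : (2*(Real.pi:ℂ))/(Complex.I*((r:ℂ)-n)) = 2*Real.pi * (Complex.I/((n:ℂ)-r)) := by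
    rw [mul_div_assoc', div_eq_div_iff (mul_ne_zero Complex.I_ne_zero h2) h3]
    linear_combination (2*(Real.pi:ℂ)*((n:ℂ)-(r:ℂ)))*Complex.I_sq
  push_cast
  rw [key]
  field_simp

lemma vhat_lower (N₀ : ℕ) (c : ℤ → ℂ) (n : ℤ) (hn : (N₀:ℤ) < |n|)
    (hμ : (∑ r ∈ Finset.Icc (-(N₀:ℤ)) (N₀:ℤ), c r) ≠ 0)
    (hbig : (N₀:ℝ) + 2*(∑ r ∈ Finset.Icc (-(N₀:ℤ)) (N₀:ℤ), ‖c r‖)*(N₀:ℝ)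
        / ‖∑ r ∈ Finset.Icc (-(N₀:ℤ)) (N₀:ℤ), c r‖ ≤ |(n:ℝ)|) :
    ‖∑ r ∈ Finset.Icc (-(N₀:ℤ)) (N₀:ℤ), c r‖ / (2*|(n:ℝ)|)
      ≤ ‖∑ r ∈ Finset.Icc (-(N₀:ℤ)) (N₀:ℤ), c r * (Complex.I/((n:ℂ)-(r:ℂ)))‖ := by
  set S := Finset.Icc (-(N₀:ℤ)) (N₀:ℤ) with hS
  set μ := ∑ r ∈ S, c r with hμdef
  set C := ∑ r ∈ S, ‖c r‖ with hC
  set z := ∑ r ∈ S, c r * (Complex.I/((n:ℂ)-(r:ℂ))) with hz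
  set A := ‖μ‖ with hA
  have hA0 : 0 < A := by
    rw [hA]; exact norm_pos_iff.mpr hμ
  have hC0 : 0 ≤ C := Finset.sum_nonneg fun r _ => norm_nonneg _
  have hnabs : (N₀:ℝ) < |(n:ℝ)| := by
    rw [← Int.cast_abs]; exact_mod_cast hn
  have hn0 : (0:ℝ) < |(n:ℝ)| := lt_of_le_of_lt (Nat.cast_nonneg _) hnabs
  have hd0 : (0:ℝ) < |(n:ℝ)| - N₀ := by linarith
  have hnr : ∀ r ∈ S, ((n:ℂ) - r) ≠ 0 := by
    intro r hr
    rw [hS, Finset.mem_Icc] at hr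
    have hz' : n - r ≠ 0 := by rcases abs_cases n with ⟨h1,h2⟩|⟨h1,h2⟩ <;> omega
    have h := Int.cast_ne_zero (α := ℂ) |>.mpr hz'
    push_cast at h; exact h
  set E := ∑ r ∈ S, c r * Complex.I * (r:ℂ)/((n:ℂ)-r) with hE
  have hsplit : (n:ℂ) * z = Complex.I * μ + E := by
    rw [hz, hE, hμdef, Finset.mul_sum, Finset.mul_sum, ← Finset.sum_add_distrib]
    apply Finset.sum_congr rfl
    intro r hr
    field_simp [hnr r hr]
    ring
  have hEbound : ‖E‖ ≤ C * ((N₀:ℝ)/(|(n:ℝ)| - N₀)) := by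
    rw [hE, hC, Finset.sum_mul]
    refine le_trans (norm_sum_le _ _) (Finset.sum_le_sum ?_)
    intro r hr
    have hrmem := hr
    rw [hS, Finset.mem_Icc] at hrmem
    have hrabs : |(r:ℝ)| ≤ (N₀:ℝ) := by
      rw [← Int.cast_abs]
      exact_mod_cast abs_le.mpr hrmem
    have hnr_abs : |(n:ℝ)| - (N₀:ℝ) ≤ ‖(n:ℂ)-(r:ℂ)‖ := by
      have : ((n:ℂ)-(r:ℂ)) = ((n - r : ℤ) : ℂ) := by push_cast; ring
      rw [this, Complex.norm_intCast]
      push_cast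
      calc |(n:ℝ)| - (N₀:ℝ) ≤ |(n:ℝ)| - |(r:ℝ)| := by linarith
        _ ≤ |(n:ℝ) - (r:ℝ)| := abs_sub_abs_le_abs_sub _ _
    have habs_term : ‖c r * Complex.I * (r:ℂ)/((n:ℂ)-r)‖
        = ‖c r‖ * |(r:ℝ)| / ‖(n:ℂ)-(r:ℂ)‖ := by
      rw [norm_div, norm_mul, norm_mul, Complex.norm_I, mul_one, Complex.norm_intCast]
    rw [habs_term, mul_div_assoc]
    apply mul_le_mul_of_nonneg_left _ (norm_nonneg _)
    exact div_le_div₀ (Nat.cast_nonneg _) hrabs hd0 hnr_abs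
  have hhalf : C * ((N₀:ℝ)/(|(n:ℝ)| - N₀)) ≤ A/2 := by
    rw [mul_div_assoc', div_le_div_iff₀ hd0 two_pos]
    have h1 : 2*C*(N₀:ℝ)/A ≤ |(n:ℝ)| - (N₀:ℝ) := by linarith
    rw [div_le_iff₀ hA0] at h1
    nlinarith [h1]
  have htri : A - ‖E‖ ≤ ‖(n:ℂ)*z‖ := by
    rw [hsplit]
    have h := norm_sub_le (Complex.I*μ + E) E
    simp only [add_sub_cancel_right, norm_mul, Complex.norm_I, one_mul] at h
    linarith
  have hzabs : ‖(n:ℂ)*z‖ = |(n:ℝ)| * ‖z‖ := by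
    rw [norm_mul, Complex.norm_intCast]
  have hfin : A/2 ≤ |(n:ℝ)| * ‖z‖ := by
    rw [← hzabs]; linarith
  rw [div_le_iff₀ (by positivity : (0:ℝ) < 2*|(n:ℝ)|)]
  nlinarith [hfin]

/-- For `u` a nonzero band-limited periodic function with `û` supported in `[−N₀, N₀]`
and `Σ_r û(r) ≠ 0`, the function `v(x) = (x−π)u(x)` is not in `H^s` of the torus for
any `s ≥ 1/2`: the sum `Σ_n (1+|n|^{2s})|v̂(n)|²` diverges. -/
theorem position_operator_not_in_Hs (u : ℝ → ℂ) (hu : Continuous u)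
    (hper : Function.Periodic u (2 * Real.pi)) (N₀ : ℕ)
    (hband : ∀ r : ℤ, (N₀ : ℤ) < |r| → fourierCoeff' u r = 0)
    (hne : (∑ r ∈ Finset.Icc (-(N₀ : ℤ)) (N₀ : ℤ), fourierCoeff' u r) ≠ 0)
    (s : ℝ) (hs : 1 / 2 ≤ s) :
    ¬ Summable (fun n : ℤ =>
        (1 + |(n : ℝ)| ^ (2 * s)) *
          ‖fourierCoeff' (fun x => ((x : ℂ) - (Real.pi : ℂ)) * u x) n‖ ^ 2) := by
  haveI : Fact (0 < 2*Real.pi) := ⟨by positivity⟩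
  intro hsum
  set c := fun r : ℤ => fourierCoeff' u r with hcdef
  set S := Finset.Icc (-(N₀:ℤ)) (N₀:ℤ) with hSdef
  set A := ‖∑ r ∈ S, c r‖ with hAdef
  set C := ∑ r ∈ S, ‖c r‖ with hCdef
  have hA0 : 0 < A := norm_pos_iff.mpr hne
  -- expansion of u
  have hband' : ∀ r : ℤ, (N₀:ℤ) < |r| → fourierCoeff hper.lift r = 0 := by
    intro r hr
    rw [← fourierCoeff'_eq u hper]
    exact hband r hr
  have hexp : ∀ x : ℝ, u x = ∑ r ∈ S, c r * Complex.exp (Complex.I * r * x) := by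
    intro x
    rw [band_limited_eq u hu hper N₀ hband' x]
    apply Finset.sum_congr rfl
    intro r _
    rw [hcdef]
    simp only
    rw [fourierCoeff'_eq u hper]
  have hformula := vhat_formula u hu N₀ hexp
  -- choose M
  obtain ⟨M, hMb⟩ := exists_nat_ge (max ((N₀:ℝ) + 2*C*(N₀:ℝ)/A) ((N₀:ℝ)+1))
  have hMbig : (N₀:ℝ) + 2*C*(N₀:ℝ)/A ≤ (M:ℝ) := le_trans (le_max_left _ _) hMb
  have hM1 : N₀ + 1 ≤ M := by
    have h := le_trans (le_max_right _ _) hMb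
    exact_mod_cast h
  -- lower bound for each k
  have hlow : ∀ k : ℕ, A^2/4 * (1/((M:ℝ)+k))
      ≤ (1 + |(((M:ℤ)+k : ℤ) : ℝ)| ^ (2 * s)) *
          ‖fourierCoeff' (fun x => ((x : ℂ) - (Real.pi : ℂ)) * u x) ((M:ℤ)+k)‖ ^ 2 := by
    intro k
    set n : ℤ := (M:ℤ) + k with hn
    have hMpos : 0 < M := by omega
    have habs_n : |n| = n := abs_of_nonneg (by positivity)
    have hnN : (N₀:ℤ) < |n| := by rw [habs_n]; omega
    have habs_nR : |(n:ℝ)| = (M:ℝ) + k := by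
      rw [← Int.cast_abs, habs_n, hn]; push_cast; ring
    have hn1 : (1:ℝ) ≤ |(n:ℝ)| := by
      rw [habs_nR]; push_cast
      have : (1:ℝ) ≤ (M:ℝ) := by exact_mod_cast hMpos
      linarith [Nat.cast_nonneg (α := ℝ) k]
    have hbig : (N₀:ℝ) + 2*C*(N₀:ℝ)/A ≤ |(n:ℝ)| := by
      rw [habs_nR]
      calc (N₀:ℝ) + 2*C*(N₀:ℝ)/A ≤ (M:ℝ) := hMbig
        _ ≤ (M:ℝ)+k := by linarith [Nat.cast_nonneg (α := ℝ) k]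
    have hlower := vhat_lower N₀ c n hnN hne hbig
    rw [← hformula n hnN] at hlower
    have habspos : 0 ≤ ‖fourierCoeff' (fun x => ((x : ℂ) - (Real.pi : ℂ)) * u x) n‖ :=
      norm_nonneg _
    have hsq : (A / (2*|(n:ℝ)|))^2
        ≤ ‖fourierCoeff' (fun x => ((x : ℂ) - (Real.pi : ℂ)) * u x) n‖ ^ 2 := by
      apply pow_le_pow_left₀ (by positivity) hlower
    have hrpow : |(n:ℝ)| ≤ |(n:ℝ)| ^ (2*s) := by
      calc |(n:ℝ)| = |(n:ℝ)| ^ (1:ℝ) := (Real.rpow_one _).symm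
        _ ≤ |(n:ℝ)| ^ (2*s) := Real.rpow_le_rpow_of_exponent_le hn1 (by linarith)
    have hnpos : (0:ℝ) < |(n:ℝ)| := by linarith
    calc A^2/4 * (1/((M:ℝ)+k)) = |(n:ℝ)| * (A / (2*|(n:ℝ)|))^2 := by
          rw [habs_nR]; field_simp; ring
      _ ≤ (1 + |(n:ℝ)| ^ (2*s)) * (A / (2*|(n:ℝ)|))^2 := by
          apply mul_le_mul_of_nonneg_right _ (by positivity)
          linarith
      _ ≤ (1 + |(n:ℝ)| ^ (2*s)) *
          ‖fourierCoeff' (fun x => ((x : ℂ) - (Real.pi : ℂ)) * u x) n‖ ^ 2 := by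
          apply mul_le_mul_of_nonneg_left hsq (by positivity)
  -- summability transfer
  have hinj : Function.Injective (fun k : ℕ => (M:ℤ) + k) := by
    intro a b hab
    simp only at hab
    omega
  have hsub := hsum.comp_injective hinj
  have hcomp : Summable (fun k : ℕ => A^2/4 * (1/((M:ℝ)+k))) := by
    apply Summable.of_nonneg_of_le (fun k => by positivity) (fun k => hlow k) hsub
  have h4 : (A^2/4 : ℝ) ≠ 0 := by positivity
  have hharm : Summable (fun k : ℕ => 1/((M:ℝ)+k)) :=
    (summable_mul_left_iff h4).mp hcomp
  have : Summable (fun k : ℕ => 1/((k:ℝ))) := by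
    rw [← summable_nat_add_iff M]
    apply hharm.congr
    intro k
    push_cast
    ring
  exact Real.not_summable_one_div_natCast this
end
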